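/- arXiv:1111.2113 — 3 statements merged into one kernel-verified Lean document; each statement's English description precedes it below -/
import Mathlib

section
/- Let m be a positive integer and let W = sqrt(Q/m) where Q follows a chi-squared distribution with m degrees of freedom, with probability density f_W. Then for every real x, ∫_0^∞ φ(wx) w² f_W(w) dw = (1/√(2π)) (m/(x²+m))^{(m/2)+1}, where φ denotes the standard normal probability density function. -/
/-!
With `s = m / 2`, the density of `W` is `2 sˢ / Γ(s) · w^(2s-1) e^(-s w²)`, so the integrand is a
constant times `w^(2(s+1)-1) e^(-b w²)` with `b = x²/2 + s`. The Gaussian moment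
`∫₀^∞ w^(2a-1) e^(-b w²) dw = Γ(a) / (2 bᵃ)` and `Γ(s+1) = s Γ(s)` then collapse the constant to
`(s / b)^(s+1) = (m / (x² + m))^(m/2+1)`.
-/

open MeasureTheory Real Set

/-- Standard normal probability density function. -/
noncomputable def stdPDF (u : ℝ) : ℝ := (Real.sqrt (2 * Real.pi))⁻¹ * Real.exp (-u ^ 2 / 2)

/-- Density of the chi-squared distribution with `m` degrees of freedom. -/
noncomputable def chisqPDF (m : ℕ) (q : ℝ) : ℝ :=
  if 0 < q then q ^ ((m : ℝ) / 2 - 1) * Real.exp (-q / 2) /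
    (2 ^ ((m : ℝ) / 2) * Real.Gamma ((m : ℝ) / 2)) else 0

/-- Density of `W = sqrt(Q/m)` where `Q ~ χ²_m`. -/
noncomputable def fW (m : ℕ) (w : ℝ) : ℝ := 2 * m * w * chisqPDF m (m * w ^ 2)

theorem integral_rpow_mul_exp_neg_mul_sq_Ioi {a b : ℝ} (ha : 0 < a) (hb : 0 < b) :
    ∫ w in Ioi (0 : ℝ), w ^ (2 * a - 1) * exp (-b * w ^ 2) = Gamma a / (2 * b ^ a) := by
  have h := integral_rpow_mul_exp_neg_mul_rpow two_pos (by linarith : -1 < 2 * a - 1) hb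
  simp only [rpow_two] at h
  rw [h, show (2 * a - 1 + 1) / 2 = a by ring, show -(2 * a - 1 + 1) / 2 = -a by ring,
    rpow_neg hb.le]
  field_simp

theorem fW_eq_of_pos {m : ℕ} (hm : 0 < m) {w : ℝ} (hw : 0 < w) :
    fW m w = 2 * ((m : ℝ) / 2) ^ ((m : ℝ) / 2) / Gamma ((m : ℝ) / 2) *
      (w ^ (2 * ((m : ℝ) / 2) - 1) * exp (-((m : ℝ) / 2) * w ^ 2)) := by
  rw [fW, chisqPDF, if_pos (by positivity)]
  set s : ℝ := (m : ℝ) / 2 with hs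
  have hs0 : 0 < s := by positivity
  have hm2 : (m : ℝ) = 2 * s := by rw [hs]; ring
  have hpow : ((m : ℝ) * w ^ 2) ^ (s - 1) = (2 * s) ^ s / (2 * s) * (w ^ (2 * s - 1) / w) := by
    rw [hm2, mul_rpow (by positivity) (by positivity), ← rpow_natCast w 2, ← rpow_mul hw.le,
      rpow_sub_one (by positivity), ← rpow_sub_one hw.ne']
    congr 2
    push_cast; ring
  rw [hpow, mul_rpow zero_le_two hs0.le, hm2]
  field_simp

theorem stmt0 (m : ℕ) (hm : 0 < m) (x : ℝ) :
    ∫ w in Set.Ioi (0 : ℝ), stdPDF (w * x) * w ^ 2 * fW m w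
      = (Real.sqrt (2 * Real.pi))⁻¹ * ((m / (x ^ 2 + m)) ^ ((m : ℝ) / 2 + 1)) := by
  set s : ℝ := (m : ℝ) / 2 with hs
  set b : ℝ := x ^ 2 / 2 + s with hb
  have hs0 : 0 < s := by positivity
  have hb0 : 0 < b := by positivity
  have hintegrand : ∀ w ∈ Ioi (0 : ℝ), stdPDF (w * x) * w ^ 2 * fW m w =
      (sqrt (2 * π))⁻¹ * (2 * s ^ s / Gamma s) *
        (w ^ (2 * (s + 1) - 1) * exp (-b * w ^ 2)) := by
    intro w hw
    have hw : (0 : ℝ) < w := hw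
    rw [fW_eq_of_pos hm hw, ← hs, stdPDF, show 2 * (s + 1) - 1 = (2 * s - 1) + 2 by ring,
      rpow_add hw, rpow_two, hb, neg_add, add_mul, exp_add]
    ring_nf
  have hratio : s / b = m / (x ^ 2 + m) := by rw [hs, hb]; field_simp; ring
  rw [setIntegral_congr_fun measurableSet_Ioi hintegrand, integral_const_mul,
    integral_rpow_mul_exp_neg_mul_sq_Ioi (by positivity) hb0, Gamma_add_one hs0.ne', ← hratio,
    div_rpow hs0.le hb0.le, rpow_add_one hs0.ne']
  field_simp
end

section
/- Let m be a positive integer, λ ∈ (0,1), x ≥ 0, and suppose λ = λ(m) solves √m·√((√(2/π)·(1−λ) t(m) E(W)/λ)^{2/(m+2)} − 1) = t(m). Then the function t ↦ C·t − ∫_0^∞ Φ(tw) φ(wx) w f_W(w) dw, where C = (λ/(2(1−λ) t(m) E(W))) ∫_0^∞ φ(wx) w² f_W(w) dw, attains its minimum over t > 0 at t = √(1 + x²/m) · t(m). -/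
open MeasureTheory Real Set Filter

/-- Standard normal cumulative distribution function. -/
noncomputable def stdCDF (u : ℝ) : ℝ := ∫ t in Set.Iic u, stdPDF t

/-- `E(W)` for `W = sqrt(Q/m)`, `Q ~ χ²_m`. -/
noncomputable def EW (m : ℕ) : ℝ := ∫ w in Set.Ioi (0 : ℝ), w * fW m w

/-- Density of the Student t distribution with `m` degrees of freedom. -/
noncomputable def tPDF (m : ℕ) (x : ℝ) : ℝ :=
  Real.Gamma (((m : ℝ) + 1) / 2) / (Real.sqrt (m * Real.pi) * Real.Gamma ((m : ℝ) / 2)) *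
    (1 + x ^ 2 / m) ^ (-(((m : ℝ) + 1) / 2))

/-- The one-dimensional criterion `t ↦ C t − ∫₀^∞ Φ(tw) φ(wx) w f_W(w) dw`. -/
noncomputable def crit (m : ℕ) (l tm x t : ℝ) : ℝ :=
  (l / (2 * (1 - l) * tm * EW m) *
      ∫ w in Set.Ioi (0 : ℝ), stdPDF (w * x) * w ^ 2 * fW m w) * t -
    ∫ w in Set.Ioi (0 : ℝ), stdCDF (t * w) * stdPDF (w * x) * w * fW m w

/-!
On `[0, ∞)` the normal density is decreasing, so `Φ` is concave there and lies below its tangent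
at any `s ≥ 0`: `Φ(tw) ≤ Φ(sw) + φ(sw) (t - s) w`. Integrating against the nonnegative weight
`φ(wx) w f_W(w)` shows that the criterion at `t` is at least its value at `s` as soon as the
constant `C` equals `∫₀^∞ φ(sw) φ(wx) w² f_W(w) dw`, i.e. the derivative vanishes at `s`. Both
integrals are Gamma integrals, `∫₀^∞ w² f_W(w) e^{-a w²/2} dw = (m/(m+a))^{m/2+1}`, and the
defining equation of `λ` says exactly `(1 + t(m)²/m)^{(m+2)/2} = √(2/π) (1-λ) t(m) E(W) / λ`,
which makes the two sides agree at `s = √(1 + x²/m) t(m)`.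
-/

open ProbabilityTheory

lemma stdPDF_eq_gaussianPDFReal : stdPDF = gaussianPDFReal 0 1 := by
  ext u
  simp [stdPDF, gaussianPDFReal]

lemma integrable_stdPDF : Integrable stdPDF :=
  stdPDF_eq_gaussianPDFReal ▸ integrable_gaussianPDFReal 0 1

lemma measurable_stdPDF : Measurable stdPDF :=
  stdPDF_eq_gaussianPDFReal ▸ measurable_gaussianPDFReal 0 1

lemma integral_stdPDF : ∫ u, stdPDF u = 1 := by
  rw [stdPDF_eq_gaussianPDFReal, integral_gaussianPDFReal_eq_one 0 one_ne_zero]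

lemma stdPDF_nonneg (u : ℝ) : 0 ≤ stdPDF u := by
  unfold stdPDF
  positivity

lemma stdPDF_le (u : ℝ) : stdPDF u ≤ (√(2 * π))⁻¹ :=
  mul_le_of_le_one_right (by positivity) (exp_le_one_iff.2 (by linarith [sq_nonneg u]))

lemma stdPDF_antitoneOn : AntitoneOn stdPDF (Ici 0) := by
  intro u hu v _ huv
  unfold stdPDF
  gcongr

lemma stdCDF_nonneg (u : ℝ) : 0 ≤ stdCDF u :=
  setIntegral_nonneg measurableSet_Iic fun _ _ => stdPDF_nonneg _

lemma stdCDF_le_one (u : ℝ) : stdCDF u ≤ 1 :=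
  integral_stdPDF ▸ setIntegral_le_integral integrable_stdPDF (.of_forall stdPDF_nonneg)

lemma stdCDF_mono : Monotone stdCDF := fun _ _ huv =>
  setIntegral_mono_set integrable_stdPDF.integrableOn (.of_forall stdPDF_nonneg)
    (Iic_subset_Iic.2 huv).eventuallyLE

lemma stdCDF_sub_stdCDF (a b : ℝ) : stdCDF b - stdCDF a = ∫ u in a..b, stdPDF u :=
  intervalIntegral.integral_Iic_sub_Iic integrable_stdPDF.integrableOn
    integrable_stdPDF.integrableOn

lemma stdCDF_le_add_stdPDF_mul_sub {u v : ℝ} (hu : 0 ≤ u) (hv : 0 ≤ v) :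
    stdCDF u ≤ stdCDF v + stdPDF v * (u - v) := by
  rcases le_total v u with hvu | huv
  · have h : ∫ y in v..u, stdPDF y ≤ ∫ _ in v..u, stdPDF v :=
      intervalIntegral.integral_mono_on hvu integrable_stdPDF.intervalIntegrable
        intervalIntegrable_const fun y hy => stdPDF_antitoneOn hv (hv.trans hy.1) hy.1
    rw [intervalIntegral.integral_const, smul_eq_mul, ← stdCDF_sub_stdCDF] at h
    linarith
  · have h : ∫ _ in u..v, stdPDF v ≤ ∫ y in u..v, stdPDF y :=
      intervalIntegral.integral_mono_on huv intervalIntegrable_const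
        integrable_stdPDF.intervalIntegrable fun y hy => stdPDF_antitoneOn (hu.trans hy.1) hv hy.2
    rw [intervalIntegral.integral_const, smul_eq_mul, ← stdCDF_sub_stdCDF] at h
    linarith

lemma integral_stdCDF_mul_le {g : ℝ → ℝ} (hg : IntegrableOn g (Ioi 0))
    (hwg : IntegrableOn (fun w => w * g w) (Ioi 0)) (hg_nonneg : ∀ w ∈ Ioi (0 : ℝ), 0 ≤ g w)
    {s t : ℝ} (hs : 0 ≤ s) (ht : 0 ≤ t) :
    ∫ w in Ioi 0, stdCDF (t * w) * g w ≤
      (∫ w in Ioi 0, stdCDF (s * w) * g w) +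
        (t - s) * ∫ w in Ioi 0, stdPDF (s * w) * (w * g w) := by
  have hCDF (c : ℝ) : IntegrableOn (fun w => stdCDF (c * w) * g w) (Ioi 0) :=
    hg.bdd_mul (c := 1) (stdCDF_mono.measurable.comp (measurable_const_mul c)).aestronglyMeasurable
      (.of_forall fun _ => (norm_of_nonneg (stdCDF_nonneg _)).trans_le (stdCDF_le_one _))
  have hPDF : IntegrableOn (fun w => stdPDF (s * w) * (w * g w)) (Ioi 0) :=
    hwg.bdd_mul (measurable_stdPDF.comp (measurable_const_mul s)).aestronglyMeasurable
      (.of_forall fun _ => (norm_of_nonneg (stdPDF_nonneg _)).trans_le (stdPDF_le _))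
  calc ∫ w in Ioi 0, stdCDF (t * w) * g w
      ≤ ∫ w in Ioi 0, (stdCDF (s * w) * g w + (t - s) * (stdPDF (s * w) * (w * g w))) := by
        refine setIntegral_mono_on (hCDF t) ((hCDF s).add (hPDF.const_mul (t - s)))
          measurableSet_Ioi fun w hw => ?_
        have hw' : 0 ≤ w := le_of_lt hw
        calc stdCDF (t * w) * g w ≤ (stdCDF (s * w) + stdPDF (s * w) * (t * w - s * w)) * g w :=
              mul_le_mul_of_nonneg_right
                (stdCDF_le_add_stdPDF_mul_sub (mul_nonneg ht hw') (mul_nonneg hs hw'))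
                (hg_nonneg w hw)
          _ = _ := by ring
    _ = _ := by rw [integral_add (hCDF s) (hPDF.const_mul (t - s)), integral_const_mul]

lemma fW_eq {m : ℕ} (hm : 0 < m) {w : ℝ} (hw : 0 < w) :
    fW m w = 2 * ((m : ℝ) / 2) ^ ((m : ℝ) / 2) / Gamma ((m : ℝ) / 2) *
      (w ^ ((m : ℝ) - 1) * exp (-((m : ℝ) / 2) * w ^ 2)) := by
  have hm' : (0 : ℝ) < m := Nat.cast_pos.2 hm
  have hpow : ((m : ℝ) * w ^ 2) ^ ((m : ℝ) / 2 - 1) =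
      (m : ℝ) ^ ((m : ℝ) / 2) / m * (w ^ (m : ℝ) / w ^ 2) := by
    rw [mul_rpow hm'.le (sq_nonneg w), rpow_sub_one hm'.ne', ← rpow_natCast w 2,
      ← rpow_mul hw.le, ← rpow_sub hw]
    ring_nf
  rw [fW, chisqPDF, if_pos (by positivity), hpow, div_rpow hm'.le zero_le_two,
    rpow_sub_one hw.ne', show -((m : ℝ) * w ^ 2) / 2 = -((m : ℝ) / 2) * w ^ 2 by ring]
  field_simp

lemma fW_nonneg (m : ℕ) {w : ℝ} (hw : 0 ≤ w) : 0 ≤ fW m w := by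
  rw [fW, chisqPDF]
  split_ifs <;> positivity

lemma pow_mul_fW_mul_exp_eq {m : ℕ} (hm : 0 < m) (k : ℕ) (a : ℝ) {w : ℝ} (hw : 0 < w) :
    w ^ k * fW m w * exp (-(a * w ^ 2) / 2) =
      2 * ((m : ℝ) / 2) ^ ((m : ℝ) / 2) / Gamma ((m : ℝ) / 2) *
        (w ^ ((m : ℝ) + k - 1) * exp (-(((m : ℝ) + a) / 2) * w ^ 2)) := by
  rw [fW_eq hm hw, add_sub_right_comm, rpow_add hw, rpow_natCast,
    show -(((m : ℝ) + a) / 2) * w ^ 2 = -((m : ℝ) / 2) * w ^ 2 + -(a * w ^ 2) / 2 by ring, exp_add]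
  ring

lemma integrableOn_pow_mul_fW_mul_exp {m : ℕ} (hm : 0 < m) (k : ℕ) {a : ℝ} (ha : 0 ≤ a) :
    IntegrableOn (fun w => w ^ k * fW m w * exp (-(a * w ^ 2) / 2)) (Ioi 0) := by
  have hm' : (0 : ℝ) < m := Nat.cast_pos.2 hm
  have hk : (0 : ℝ) ≤ k := k.cast_nonneg
  refine IntegrableOn.congr_fun (Integrable.const_mul
      (integrableOn_rpow_mul_exp_neg_mul_sq (b := ((m : ℝ) + a) / 2) (by positivity)
        (by linarith)) _)
    (fun w hw => (pow_mul_fW_mul_exp_eq hm k a hw).symm) measurableSet_Ioi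

lemma integral_pow_mul_fW_mul_exp {m : ℕ} (hm : 0 < m) (k : ℕ) {a : ℝ} (ha : 0 ≤ a) :
    ∫ w in Ioi 0, w ^ k * fW m w * exp (-(a * w ^ 2) / 2) =
      ((m : ℝ) / 2) ^ ((m : ℝ) / 2) / Gamma ((m : ℝ) / 2) *
        ((((m : ℝ) + a) / 2) ^ (-(((m : ℝ) + k) / 2)) * Gamma (((m : ℝ) + k) / 2)) := by
  have hm' : (0 : ℝ) < m := Nat.cast_pos.2 hm
  have hk : (0 : ℝ) ≤ k := k.cast_nonneg
  rw [setIntegral_congr_fun measurableSet_Ioi fun w hw => pow_mul_fW_mul_exp_eq hm k a hw,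
    integral_const_mul]
  simp_rw [← rpow_two]
  rw [integral_rpow_mul_exp_neg_mul_rpow two_pos (by linarith) (by positivity),
    sub_add_cancel, neg_div]
  ring

lemma EW_pos {m : ℕ} (hm : 0 < m) : 0 < EW m := by
  have h := integral_pow_mul_fW_mul_exp hm 1 le_rfl
  simp only [pow_one, zero_mul, neg_zero, zero_div, exp_zero, mul_one, add_zero] at h
  rw [EW, h]
  positivity

lemma integral_sq_mul_fW_mul_exp {m : ℕ} (hm : 0 < m) {a : ℝ} (ha : 0 ≤ a) :
    ∫ w in Ioi 0, w ^ 2 * fW m w * exp (-(a * w ^ 2) / 2) =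
      ((m : ℝ) / (m + a)) ^ ((m : ℝ) / 2 + 1) := by
  have hm' : (0 : ℝ) < m := Nat.cast_pos.2 hm
  rw [integral_pow_mul_fW_mul_exp hm 2 ha,
    show ((m : ℝ) + (2 : ℕ)) / 2 = m / 2 + 1 by push_cast; ring, Gamma_add_one (by positivity),
    rpow_neg (by positivity), div_rpow hm'.le zero_le_two,
    div_rpow (by positivity) zero_le_two, div_rpow hm'.le (by positivity), rpow_add_one hm'.ne',
    rpow_add_one two_ne_zero]
  field_simp

lemma integral_stdPDF_mul_sq_mul_fW {m : ℕ} (hm : 0 < m) (x : ℝ) :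
    ∫ w in Ioi 0, stdPDF (w * x) * w ^ 2 * fW m w =
      (√(2 * π))⁻¹ * ((m : ℝ) / (m + x ^ 2)) ^ ((m : ℝ) / 2 + 1) := by
  rw [← integral_sq_mul_fW_mul_exp hm (sq_nonneg x), ← integral_const_mul]
  congr 1
  ext w
  rw [stdPDF]
  ring_nf

lemma stdPDF_mul_stdPDF (u v : ℝ) :
    stdPDF u * stdPDF v = (2 * π)⁻¹ * exp (-(u ^ 2 + v ^ 2) / 2) := by
  rw [stdPDF, stdPDF, mul_mul_mul_comm, ← mul_inv, mul_self_sqrt (by positivity), ← exp_add]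
  ring_nf

lemma integral_stdPDF_mul_stdPDF_mul_sq_mul_fW {m : ℕ} (hm : 0 < m) (s x : ℝ) :
    ∫ w in Ioi 0, stdPDF (s * w) * stdPDF (w * x) * w ^ 2 * fW m w =
      (2 * π)⁻¹ * ((m : ℝ) / (m + (s ^ 2 + x ^ 2))) ^ ((m : ℝ) / 2 + 1) := by
  rw [← integral_sq_mul_fW_mul_exp hm (by positivity), ← integral_const_mul]
  congr 1
  ext w
  rw [stdPDF_mul_stdPDF]
  ring_nf

lemma integrableOn_stdPDF_mul_pow_mul_fW {m : ℕ} (hm : 0 < m) (k : ℕ) (x : ℝ) :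
    IntegrableOn (fun w => stdPDF (w * x) * w ^ k * fW m w) (Ioi 0) := by
  refine IntegrableOn.congr_fun
    ((integrableOn_pow_mul_fW_mul_exp hm k (sq_nonneg x)).const_mul (√(2 * π))⁻¹)
    (fun w _ => ?_) measurableSet_Ioi
  rw [stdPDF]
  ring_nf

lemma crit_le_crit_of_coeff_eq {m : ℕ} (hm : 0 < m) {l tm x s : ℝ} (hs : 0 ≤ s)
    (hcoeff : l / (2 * (1 - l) * tm * EW m) * ∫ w in Ioi 0, stdPDF (w * x) * w ^ 2 * fW m w =
      ∫ w in Ioi 0, stdPDF (s * w) * stdPDF (w * x) * w ^ 2 * fW m w)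
    {t : ℝ} (ht : 0 ≤ t) : crit m l tm x s ≤ crit m l tm x t := by
  have hg : IntegrableOn (fun w => stdPDF (w * x) * w * fW m w) (Ioi 0) := by
    simpa using integrableOn_stdPDF_mul_pow_mul_fW hm 1 x
  have hwg : IntegrableOn (fun w => w * (stdPDF (w * x) * w * fW m w)) (Ioi 0) :=
    IntegrableOn.congr_fun (integrableOn_stdPDF_mul_pow_mul_fW hm 2 x) (fun w _ => by ring)
      measurableSet_Ioi
  have hg_nonneg : ∀ w ∈ Ioi (0 : ℝ), 0 ≤ stdPDF (w * x) * w * fW m w := fun w hw =>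
    mul_nonneg (mul_nonneg (stdPDF_nonneg _) (le_of_lt hw)) (fW_nonneg m (le_of_lt hw))
  have htangent := integral_stdCDF_mul_le hg hwg hg_nonneg hs ht
  have hslope : ∫ w in Ioi 0, stdPDF (s * w) * (w * (stdPDF (w * x) * w * fW m w)) =
      ∫ w in Ioi 0, stdPDF (s * w) * stdPDF (w * x) * w ^ 2 * fW m w := by
    congr 1
    ext w
    ring
  simp only [crit, hcoeff, ← hslope, ← mul_assoc] at htangent ⊢
  linarith

lemma one_add_sq_div_rpow_eq {m A t : ℝ} (hm : 0 < m) (hA : 0 < A)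
    (h : √m * √(A ^ (2 / (m + 2)) - 1) = t) (ht : 0 < t) :
    (1 + t ^ 2 / m) ^ ((m + 2) / 2) = A := by
  -- `√` of a negative number is `0`, which `0 < t` rules out
  have hpos : 0 ≤ A ^ (2 / (m + 2)) - 1 := by
    by_contra hneg
    rw [sqrt_eq_zero_of_nonpos (x := A ^ (2 / (m + 2)) - 1) (by linarith), mul_zero] at h
    linarith
  have hsq : t ^ 2 / m = A ^ (2 / (m + 2)) - 1 := by
    rw [← h, mul_pow, sq_sqrt hm.le, sq_sqrt hpos]
    field_simp
  rw [hsq, add_sub_cancel, ← rpow_mul hA.le, div_mul_div_cancel₀ (by positivity),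
    div_self two_ne_zero, rpow_one]

lemma crit_coeff_eq {m : ℕ} (hm : 0 < m) {l tm : ℝ} (htm : 0 < tm) (hl : l ∈ Ioo (0 : ℝ) 1)
    (hlm : √m * √((√(2 / π) * (1 - l) * tm * EW m / l) ^ ((2 : ℝ) / ((m : ℝ) + 2)) - 1) = tm)
    (x : ℝ) :
    l / (2 * (1 - l) * tm * EW m) * ∫ w in Ioi 0, stdPDF (w * x) * w ^ 2 * fW m w =
      ∫ w in Ioi 0, stdPDF (√(1 + x ^ 2 / m) * tm * w) * stdPDF (w * x) * w ^ 2 * fW m w := by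
  obtain ⟨hl0, hl1⟩ := hl
  have hm' : (0 : ℝ) < m := Nat.cast_pos.2 hm
  have hEW := EW_pos hm
  have h1l : 0 < 1 - l := sub_pos.2 hl1
  have hA := one_add_sq_div_rpow_eq hm' (by positivity) hlm htm
  have hsum : (m : ℝ) + ((√(1 + x ^ 2 / m) * tm) ^ 2 + x ^ 2) =
      (m + x ^ 2) * (1 + tm ^ 2 / m) := by
    rw [mul_pow, sq_sqrt (by positivity)]
    field_simp
    ring
  have hsqrt : √(2 * π) = π * √(2 / π) := by
    rw [show 2 * π = π ^ 2 * (2 / π) by field_simp, sqrt_mul (sq_nonneg π), sqrt_sq pi_pos.le]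
  rw [integral_stdPDF_mul_sq_mul_fW hm, integral_stdPDF_mul_stdPDF_mul_sq_mul_fW hm, hsum,
    ← div_div (m : ℝ), div_rpow (x := (m : ℝ) / (m + x ^ 2)) (by positivity) (by positivity),
    show (m : ℝ) / 2 + 1 = (m + 2) / 2 by ring, hA, hsqrt]
  field_simp

theorem stmt8_general (m : ℕ) (hm : 0 < m)
    (tm : ℝ) (htm : 0 < tm)
    (x : ℝ) (l : ℝ) (hl : l ∈ Set.Ioo (0 : ℝ) 1)
    (hlm : Real.sqrt m *
        Real.sqrt ((Real.sqrt (2 / Real.pi) * (1 - l) * tm * EW m / l)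
            ^ ((2 : ℝ) / ((m : ℝ) + 2)) - 1) = tm) :
    ∀ t : ℝ, 0 < t →
      crit m l tm x (Real.sqrt (1 + x ^ 2 / m) * tm) ≤ crit m l tm x t := fun _ ht =>
  crit_le_crit_of_coeff_eq hm (by positivity) (crit_coeff_eq hm htm hl hlm x) ht.le

theorem stmt8 (m : ℕ) (hm : 0 < m) (α : ℝ) (hα : α ∈ Set.Ioo (0 : ℝ) 1)
    (tm : ℝ) (htm : 0 < tm) (hq : ∫ x in Set.Ioo (-tm) tm, tPDF m x = 1 - α)
    (x : ℝ) (hx : 0 ≤ x) (l : ℝ) (hl : l ∈ Set.Ioo (0 : ℝ) 1)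
    (hlm : Real.sqrt m *
        Real.sqrt ((Real.sqrt (2 / Real.pi) * (1 - l) * tm * EW m / l)
            ^ ((2 : ℝ) / ((m : ℝ) + 2)) - 1) = tm) :
    ∀ t : ℝ, 0 < t →
      crit m l tm x (Real.sqrt (1 + x ^ 2 / m) * tm) ≤ crit m l tm x t :=
  stmt8_general m hm tm htm x l hl hlm
end

section
/- (Compromise decision theory bound) Let 𝒮 be a set, R₁, R₂ : 𝒮 × ℝ → ℝ, and π₁, π₂ probability measures on ℝ. For λ ∈ (0,1) define g(s;λ) = λ∫R₁(s;γ)dπ₁(γ) + (1−λ)∫R₂(s;γ)dπ₂(γ). Suppose s_λ minimizes g(·;λ) over 𝒮, and let ν = sup_γ R₂(s_λ;γ) − ∫R₂(s_λ;γ)dπ₂(γ). Then for every s̃ ∈ 𝒮 with sup_γ R₂(s̃;γ) ≤ sup_γ R₂(s_λ;γ), we have ∫R₁(s̃;γ)dπ₁(γ) ≥ ∫R₁(s_λ;γ)dπ₁(γ) − ((1−λ)/λ)·ν. -/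
/-!
Comparing `g(·; λ)` at `s_λ` and at `s̃`, and bounding the `π₂`-average of `R₂(s̃; ·)` by its
supremum, which is at most that of `R₂(s_λ; ·)`, gives
`λ ∫R₁(s_λ) + (1-λ) ∫R₂(s_λ) ≤ λ ∫R₁(s̃) + (1-λ) sup R₂(s_λ)`; dividing by `λ` is the claim.
-/

open MeasureTheory Real Set

theorem integral_le_ciSup {α : Type*} [MeasurableSpace α] {μ : Measure α}
    [IsProbabilityMeasure μ] {f : α → ℝ} (hf : Integrable f μ) (hbdd : BddAbove (range f)) :
    ∫ x, f x ∂μ ≤ ⨆ x, f x := by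
  simpa using integral_mono hf (integrable_const _) (le_ciSup hbdd)

theorem stmt11_general {S : Type*} (R1 R2 : S → ℝ → ℝ) (π1 π2 : Measure ℝ)
    [IsProbabilityMeasure π2]
    (l : ℝ) (hl : l ∈ Set.Ioo (0 : ℝ) 1)
    (hInt2 : ∀ s : S, Integrable (R2 s) π2)
    (hbdd : ∀ s : S, BddAbove (Set.range (R2 s)))
    (sl : S)
    (hmin : ∀ s : S,
      l * ∫ γ, R1 sl γ ∂π1 + (1 - l) * ∫ γ, R2 sl γ ∂π2
        ≤ l * ∫ γ, R1 s γ ∂π1 + (1 - l) * ∫ γ, R2 s γ ∂π2)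
    (st : S) (hst : (⨆ γ : ℝ, R2 st γ) ≤ ⨆ γ : ℝ, R2 sl γ) :
    (∫ γ, R1 sl γ ∂π1) - ((1 - l) / l) * ((⨆ γ : ℝ, R2 sl γ) - ∫ γ, R2 sl γ ∂π2)
      ≤ ∫ γ, R1 st γ ∂π1 := by
  obtain ⟨hl0, hl1⟩ := hl
  have hR2 : ∫ γ, R2 st γ ∂π2 ≤ ⨆ γ : ℝ, R2 sl γ :=
    (integral_le_ciSup (hInt2 st) (hbdd st)).trans hst
  have hcompare := hmin st
  rw [div_mul_eq_mul_div, sub_le_iff_le_add, ← sub_le_iff_le_add', le_div_iff₀ hl0]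
  nlinarith

/-- Compromise decision theory bound (Theorem 2.2(a) of Kabaila & Tuck, 2008). -/
theorem stmt11 {S : Type*} (R1 R2 : S → ℝ → ℝ) (π1 π2 : Measure ℝ)
    [IsProbabilityMeasure π1] [IsProbabilityMeasure π2]
    (l : ℝ) (hl : l ∈ Set.Ioo (0 : ℝ) 1)
    (hInt1 : ∀ s : S, Integrable (R1 s) π1) (hInt2 : ∀ s : S, Integrable (R2 s) π2)
    (hbdd : ∀ s : S, BddAbove (Set.range (R2 s)))
    (sl : S)
    (hmin : ∀ s : S,
      l * ∫ γ, R1 sl γ ∂π1 + (1 - l) * ∫ γ, R2 sl γ ∂π2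
        ≤ l * ∫ γ, R1 s γ ∂π1 + (1 - l) * ∫ γ, R2 s γ ∂π2)
    (st : S) (hst : (⨆ γ : ℝ, R2 st γ) ≤ ⨆ γ : ℝ, R2 sl γ) :
    (∫ γ, R1 sl γ ∂π1) - ((1 - l) / l) * ((⨆ γ : ℝ, R2 sl γ) - ∫ γ, R2 sl γ ∂π2)
      ≤ ∫ γ, R1 st γ ∂π1 :=
  stmt11_general R1 R2 π1 π2 l hl hInt2 hbdd sl hmin st hst
end
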